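/- arXiv:2012.00947 — 3 statements merged into one kernel-verified Lean document; each statement's English description precedes it below -/
import Mathlib

section
/- Coherent families of averaging operators exist: there is a family (m_n)_{n∈ℕ} of linear functionals m_n on ℓ^∞(Γ_n), each of operator norm 1 and sending every constant function to its value, such that m_n(f ∘ ∂_i) = m_{n−1}(f) for every n ≥ 1, every 0 ≤ i ≤ n, and every bounded function f : Γ_{n−1} → ℝ. -/
/-- `Γ n`: the set of `n`-simplices of the Δ-set `Δ[∞]`,
i.e. strictly increasing maps `Fin (n+1) → ℕ`. -/
def Gma (n : ℕ) : Type := {f : Fin (n + 1) → ℕ // StrictMono f}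

/-- The `i`-th face map `∂ᵢ : Γ (n+1) → Γ n`, precomposition with the unique strictly
increasing map `Fin (n+1) → Fin (n+2)` omitting `i`. -/
def faceG {n : ℕ} (i : Fin (n + 2)) (τ : Gma (n + 1)) : Gma n :=
  ⟨fun j => τ.1 (i.succAbove j), τ.2.comp (Fin.strictMono_succAbove i)⟩

/-- A real-valued function is bounded. -/
def IsBdd {X : Type*} (f : X → ℝ) : Prop := ∃ C : ℝ, ∀ x, |f x| ≤ C

/-- The sup norm of a real valued function. -/
noncomputable def supN {X : Type*} (f : X → ℝ) : ℝ := ⨆ x, |f x|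

/-- The space of bounded real-valued functions on `X`, as a submodule of `X → ℝ`. -/
def bddFns (X : Type*) : Submodule ℝ (X → ℝ) where
  carrier := {f | IsBdd f}
  add_mem' := by
    rintro f g ⟨C, hC⟩ ⟨D, hD⟩
    exact ⟨C + D, fun x => (abs_add_le _ _).trans (add_le_add (hC x) (hD x))⟩
  zero_mem' := ⟨0, fun x => by simp⟩
  smul_mem' := by
    rintro r f ⟨C, hC⟩
    refine ⟨|r| * C, fun x => ?_⟩
    rw [Pi.smul_apply, smul_eq_mul, abs_mul]
    exact mul_le_mul_of_nonneg_left (hC x) (abs_nonneg r)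

lemma const_mem_bddFns (X : Type*) (r : ℝ) : (fun _ : X => r) ∈ bddFns X :=
  ⟨|r|, fun _ => le_rfl⟩

lemma comp_mem_bddFns {X Y : Type*} {f : Y → ℝ} (hf : f ∈ bddFns Y) (g : X → Y) :
    (fun x => f (g x)) ∈ bddFns X := by
  obtain ⟨C, hC⟩ := hf
  exact ⟨C, fun x => hC (g x)⟩

/-- The simplicial coboundary operator associated to a system of faces. -/
noncomputable def dgen {X Y : Type*} (N : ℕ) (face : Fin N → Y → X) :
    (X → ℝ) →ₗ[ℝ] (Y → ℝ) where
  toFun f := fun y => ∑ i : Fin N, (-1 : ℝ) ^ (i : ℕ) * f (face i y)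
  map_add' f g := by
    funext y
    simp only [Pi.add_apply, mul_add]
    rw [Finset.sum_add_distrib]
  map_smul' r f := by
    funext y
    simp only [Pi.smul_apply, smul_eq_mul, RingHom.id_apply, Finset.mul_sum]
    exact Finset.sum_congr rfl fun i _ => by ring

/-
Fix an idempotent ultrafilter `U` on `(ℕ+, +)`, which exists by the Ellis–Numakura lemma, and
let `W n` be the ultrafilter on `Γ n` describing a simplex whose first vertex `a₀ - 1` and whose
successive gaps `a₁, a₂, …` are drawn one after another from `U`; then `m n` is the limit along
`W n`, which is automatically linear, unital and bounded by the sup norm. Writing a simplex as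
`(a - 1, a + τ)`, every face other than `∂₀` commutes with this decomposition, while `∂₀` just
translates `τ` by `a`. Translating `(b - 1, b + τ')` by `a` gives `(a + b - 1, a + b + τ')`, so
`∂₀` pushes `W (n + 1)` forward to `W n` because `U + U = U`.
-/

open Filter Topology

attribute [local instance] Ultrafilter.add Ultrafilter.addSemigroup

theorem Ultrafilter.eventually_eventually_add_of_add_self {M : Type*} [Add M]
    {U : Ultrafilter M} (hU : U + U = U) (p : M → Prop) :
    (∀ᶠ a in (U : Filter M), ∀ᶠ b in (U : Filter M), p (a + b)) ↔
      ∀ᶠ c in (U : Filter M), p c := by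
  rw [← Ultrafilter.eventually_add, hU]

section Ultralimit

variable {X : Type*} (W : Ultrafilter X)

theorem tendsto_limUnder_of_isBdd {f : X → ℝ} (hf : IsBdd f) :
    Tendsto f W (𝓝 (limUnder (W : Filter X) f)) := by
  obtain ⟨C, hC⟩ := hf
  obtain ⟨L, -, hL⟩ := (isCompact_Icc (a := -C) (b := C)).ultrafilter_le_nhds (W.map f)
    (le_principal_iff.2 <| Ultrafilter.mem_map.2 <| univ_mem' fun x => abs_le.1 (hC x))
  exact tendsto_nhds_limUnder ⟨L, hL⟩

theorem abs_apply_le_supN {f : X → ℝ} (hf : IsBdd f) (x : X) : |f x| ≤ supN f := by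
  obtain ⟨C, hC⟩ := hf
  exact le_ciSup ⟨C, by rintro _ ⟨y, rfl⟩; exact hC y⟩ x

noncomputable def ultralimit : bddFns X →ₗ[ℝ] ℝ where
  toFun f := limUnder (W : Filter X) (f : X → ℝ)
  map_add' f g :=
    ((tendsto_limUnder_of_isBdd W f.2).add (tendsto_limUnder_of_isBdd W g.2)).limUnder_eq
  map_smul' c f := ((tendsto_limUnder_of_isBdd W f.2).const_mul c).limUnder_eq

theorem abs_ultralimit_le (f : bddFns X) : |ultralimit W f| ≤ supN (f : X → ℝ) :=
  le_of_tendsto' (tendsto_limUnder_of_isBdd W f.2).abs (abs_apply_le_supN f.2)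

theorem ultralimit_const (r : ℝ) : ultralimit W ⟨fun _ => r, const_mem_bddFns X r⟩ = r :=
  tendsto_const_nhds.limUnder_eq

theorem ultralimit_comp {Y : Type*} (g : X → Y) (f : bddFns Y) :
    ultralimit W ⟨fun x => (f : Y → ℝ) (g x), comp_mem_bddFns f.2 g⟩ =
      ultralimit (W.map g) f :=
  ((tendsto_limUnder_of_isBdd (W.map g) f.2).comp tendsto_map).limUnder_eq

end Ultralimit

namespace Gma

variable {n : ℕ}

def translate (a : ℕ) (σ : Gma n) : Gma n :=
  ⟨fun j => a + σ.1 j, fun _ _ h => Nat.add_lt_add_left (σ.2 h) a⟩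

def vertex (a : ℕ+) : Gma 0 :=
  ⟨fun _ => a.natPred, Subsingleton.strictMono (α := Fin 1) _⟩

def cons (a : ℕ+) (σ : Gma n) : Gma (n + 1) :=
  ⟨Fin.cons a.natPred (translate a σ).1, by
    refine Fin.strictMono_iff_lt_succ.2 fun j => ?_
    induction j using Fin.cases with
    | zero =>
      simp only [PNat.natPred, translate, Fin.castSucc_zero, Fin.cons_zero, Fin.succ_zero_eq_one,
        Fin.cons_one]
      exact (Nat.sub_lt a.pos one_pos).trans_le (Nat.le_add_right _ _)
    | succ k => simpa [translate] using σ.2 k.castSucc_lt_succ⟩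

theorem translate_vertex (a b : ℕ+) : translate a (vertex b) = vertex (a + b) := by
  refine Subtype.ext (funext fun j => ?_)
  simp only [translate, vertex, PNat.natPred, PNat.add_coe]
  have := b.pos
  omega

theorem translate_cons (a b : ℕ+) (σ : Gma n) : translate a (cons b σ) = cons (a + b) σ := by
  refine Subtype.ext (funext fun j => ?_)
  induction j using Fin.cases with
  | zero =>
    simp only [translate, cons, PNat.natPred, Fin.cons_zero, PNat.add_coe]
    have := b.pos
    omega
  | succ k => simp [translate, cons, add_assoc]

theorem faceG_zero_cons (a : ℕ+) (σ : Gma n) : faceG 0 (cons a σ) = translate a σ :=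
  rfl

theorem faceG_succ_cons (i : Fin (n + 2)) (a : ℕ+) (σ : Gma (n + 1)) :
    faceG i.succ (cons a σ) = cons a (faceG i σ) := by
  refine Subtype.ext (funext fun j => ?_)
  induction j using Fin.cases with
  | zero => simp [faceG, cons]
  | succ k => simp [faceG, cons, translate]

theorem faceG_succ_cons_vertex (i : Fin 1) (a : ℕ+) (σ : Gma 0) :
    faceG i.succ (cons a σ) = vertex a := by
  refine Subtype.ext (funext fun j => ?_)
  fin_cases i; fin_cases j
  rfl

noncomputable def ultrafilter (U : Ultrafilter ℕ+) : (n : ℕ) → Ultrafilter (Gma n)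
  | 0 => U.map vertex
  | n + 1 => U.bind fun a => (ultrafilter U n).map (cons a)

variable {U : Ultrafilter ℕ+}

theorem eventually_ultrafilter_zero {p : Gma 0 → Prop} :
    (∀ᶠ σ in (ultrafilter U 0 : Filter (Gma 0)), p σ) ↔
      ∀ᶠ a in (U : Filter ℕ+), p (vertex a) :=
  Iff.rfl

theorem eventually_ultrafilter_succ {p : Gma (n + 1) → Prop} :
    (∀ᶠ σ in (ultrafilter U (n + 1) : Filter (Gma (n + 1))), p σ) ↔
      ∀ᶠ a in (U : Filter ℕ+), ∀ᶠ τ in (ultrafilter U n : Filter (Gma n)), p (cons a τ) :=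
  Iff.rfl

theorem eventually_eventually_translate (hU : U + U = U) (p : Gma n → Prop) :
    (∀ᶠ (a : ℕ+) in (U : Filter ℕ+), ∀ᶠ σ in (ultrafilter U n : Filter (Gma n)),
      p (translate a σ)) ↔ ∀ᶠ σ in (ultrafilter U n : Filter (Gma n)), p σ := by
  cases n with
  | zero =>
    simp only [eventually_ultrafilter_zero, translate_vertex]
    exact U.eventually_eventually_add_of_add_self hU (p ∘ vertex)
  | succ n =>
    simp only [eventually_ultrafilter_succ, translate_cons]
    exact U.eventually_eventually_add_of_add_self hU
      fun c => ∀ᶠ τ in (ultrafilter U n : Filter (Gma n)), p (cons c τ)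

theorem map_faceG_ultrafilter (hU : U + U = U) (n : ℕ) (i : Fin (n + 2)) :
    (ultrafilter U (n + 1)).map (faceG i) = ultrafilter U n := by
  refine Ultrafilter.coe_injective (Filter.ext' fun p => ?_)
  rw [Ultrafilter.coe_map, eventually_map, eventually_ultrafilter_succ]
  induction i using Fin.cases with
  | zero => simpa only [faceG_zero_cons] using eventually_eventually_translate hU p
  | succ j =>
    cases n with
    | zero => simp only [faceG_succ_cons_vertex, eventually_const, eventually_ultrafilter_zero]
    | succ m =>
      simp only [faceG_succ_cons]
      rw [eventually_ultrafilter_succ, ← map_faceG_ultrafilter hU m j]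
      simp only [Ultrafilter.coe_map, eventually_map]

end Gma

/-- Coherent families of averaging operators exist: there is a family
`(m_n)` of linear functionals on `ℓ^∞(Γ_n)`, each of operator norm `1` (i.e. bounded by the
sup norm) and sending every constant function to its value, such that
`m_n (f ∘ ∂ᵢ) = m_{n-1} f` for every `n ≥ 1`, every `0 ≤ i ≤ n` and every bounded `f`. -/
theorem exists_coherent_averaging_family :
    ∃ m : ∀ n : ℕ, ↥(bddFns (Gma n)) →ₗ[ℝ] ℝ,
      (∀ (n : ℕ) (f : ↥(bddFns (Gma n))), |m n f| ≤ supN (f : Gma n → ℝ)) ∧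
      (∀ (n : ℕ) (r : ℝ), m n ⟨fun _ => r, const_mem_bddFns _ r⟩ = r) ∧
      (∀ (n : ℕ) (i : Fin (n + 2)) (f : ↥(bddFns (Gma n))),
        m (n + 1) ⟨fun τ => (f : Gma n → ℝ) (faceG i τ), comp_mem_bddFns f.2 (faceG i)⟩
          = m n f) := by
  obtain ⟨U, hU⟩ := exists_idempotent_of_compact_t2_of_continuous_add_left
    (Ultrafilter.continuous_add_left (M := ℕ+))
  refine ⟨fun n => ultralimit (Gma.ultrafilter U n), fun n f => abs_ultralimit_le _ f,
    fun n r => ultralimit_const _ r, fun n i f => ?_⟩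
  rw [ultralimit_comp, Gma.map_faceG_ultrafilter hU]
end

section
/- Fix n ∈ ℕ and an abelian group A. Consider the Δ-set 𝚫[n] × Γ whose m-simplices are the pairs (θ, τ) with θ : Fin (m+1) → Fin (n+1) monotone (non-decreasing) and τ ∈ Γ_m, with face maps ∂_i(θ, τ) = (θ ∘ δ_i, ∂_i τ), where δ_i : Fin m → Fin (m+1) is the strictly increasing map whose image omits i. Then: (1) for every m ≥ 1, every m-chain c of 𝚫[n] × Γ with coefficients in A satisfying ∂c = 0 is a boundary, i.e. c = ∂b for some (m+1)-chain b; (2) every 0-chain whose coefficients sum to 0 is the boundary of a 1-chain; moreover, for A = ℤ, the bounding chain b can be chosen with ‖b‖₁ = ‖c‖₁. -/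
/-- The `m`-simplices of the Δ-set `𝚫[n] × Γ`: pairs `(θ, τ)` with
`θ : Fin (m+1) → Fin (n+1)` monotone and `τ ∈ Γ_m`. -/
def DObj (n m : ℕ) : Type := (Fin (m + 1) →o Fin (n + 1)) × Gma m

/-- The `i`-th face map of `𝚫[n] × Γ`: `∂ᵢ(θ, τ) = (θ ∘ δᵢ, ∂ᵢ τ)`. -/
def faceD {n m : ℕ} (i : Fin (m + 2)) (p : DObj n (m + 1)) : DObj n m :=
  (p.1.comp ⟨Fin.succAbove i, (Fin.strictMono_succAbove i).monotone⟩, faceG i p.2)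

/-- The boundary operator on chains of `𝚫[n] × Γ` with coefficients in an abelian
group `A`: `∂c = ∑ᵢ (-1)ⁱ (∂ᵢ)_* c`. -/
noncomputable def bdryD (A : Type*) [AddCommGroup A] (n m : ℕ) (c : DObj n (m + 1) →₀ A) :
    DObj n m →₀ A :=
  ∑ i : Fin (m + 2), ((-1 : ℤ) ^ (i : ℕ)) • Finsupp.mapDomain (faceD i) c

/-- The ℓ¹-norm of a chain with integer coefficients. -/
def l1 {X : Type*} (c : X →₀ ℤ) : ℤ := ∑ x ∈ c.support, |c x|

/-!
Coning off. Appending the vertex `(n, N)` to every simplex of a chain `c` yields simplices as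
soon as `N` exceeds every last `Γ`-vertex occurring in `c`. The last face of a cone is its base
and the other faces are cones of the faces of the base, so `∂ (cone c) = cone (∂ c) ± c` in
positive degrees. For a cycle this exhibits `± cone c` as a bounding chain; in degree `0` the
error term is the point `(n, N)` weighted by the sum of the coefficients. The cone map is
injective, so it preserves the ℓ¹-norm.
-/

open Finsupp

section Snoc

variable {α : Type*} {m : ℕ}

theorem Monotone.fin_snoc [Preorder α] {f : Fin (m + 1) → α} (hf : Monotone f) {a : α}
    (ha : f (Fin.last m) ≤ a) : Monotone (Fin.snoc f a : Fin (m + 2) → α) := by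
  rw [Fin.monotone_iff_le_succ]
  intro i
  induction i using Fin.lastCases with
  | last => simpa using ha
  | cast j =>
    simp only [Fin.succ_castSucc, Fin.snoc_castSucc]
    exact hf j.castSucc_le_succ

theorem StrictMono.fin_snoc [Preorder α] {f : Fin (m + 1) → α} (hf : StrictMono f) {a : α}
    (ha : f (Fin.last m) < a) : StrictMono (Fin.snoc f a : Fin (m + 2) → α) := by
  rw [Fin.strictMono_iff_lt_succ]
  intro i
  induction i using Fin.lastCases with
  | last => simpa using ha
  | cast j =>
    simp only [Fin.succ_castSucc, Fin.snoc_castSucc]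
    exact hf j.castSucc_lt_succ

theorem Fin.snoc_comp_castSucc_succAbove (f : Fin (m + 1) → α) (a : α) (j : Fin (m + 1))
    (k : Fin (m + 1)) :
    Fin.snoc (α := fun _ => α) f a (j.castSucc.succAbove k) =
      Fin.snoc (α := fun _ => α) (f ∘ j.succAbove) a k := by
  induction k using Fin.lastCases with
  | last => simp [Fin.succAbove_castSucc_of_le _ _ (Fin.le_last j)]
  | cast k => simp [Fin.castSucc_succAbove_castSucc]

end Snoc

namespace DObj

variable {n : ℕ}

theorem ext' {m : ℕ} {σ σ' : DObj n m} (h₁ : ⇑σ.1 = ⇑σ'.1) (h₂ : σ.2.1 = σ'.2.1) : σ = σ' :=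
  Prod.ext (OrderHom.ext _ _ h₁) (Subtype.ext h₂)

def vertex (i : Fin (n + 1)) (k : ℕ) : DObj n 0 :=
  (⟨fun _ => i, monotone_const⟩,
   ⟨fun _ => k, Subsingleton.strictMono (α := Fin 1) _⟩)

/-- The apex is `N` whenever `N` exceeds the last `Γ`-vertex of `σ`; the `max` only makes the
cone defined on every simplex. -/
def coneApex (N : ℕ) {m : ℕ} (σ : DObj n m) : ℕ := max N (σ.2.1 (Fin.last m) + 1)

theorem coneApex_eq {m : ℕ} {N : ℕ} {σ : DObj n m} (hσ : σ.2.1 (Fin.last m) < N) :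
    coneApex N σ = N :=
  max_eq_left hσ

def cone (N : ℕ) {m : ℕ} (σ : DObj n m) : DObj n (m + 1) :=
  (⟨Fin.snoc σ.1 (Fin.last n), σ.1.monotone.fin_snoc (Fin.le_last _)⟩,
   ⟨Fin.snoc σ.2.1 (coneApex N σ),
    σ.2.2.fin_snoc ((Nat.lt_succ_self _).trans_le (le_max_right _ _))⟩)

theorem faceD_last_cone (N : ℕ) {m : ℕ} (σ : DObj n m) :
    faceD (Fin.last (m + 1)) (cone N σ) = σ :=
  ext' (funext fun j => by simp [faceD, cone, Fin.succAbove_last])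
    (funext fun j => by simp [faceD, faceG, cone, Fin.succAbove_last])

theorem cone_injective (N m : ℕ) : Function.Injective (cone (n := n) N (m := m)) :=
  Function.LeftInverse.injective (g := faceD (Fin.last (m + 1))) (faceD_last_cone N)

theorem faceD_castSucc_cone {N m : ℕ} {σ : DObj n (m + 1)} (hσ : σ.2.1 (Fin.last (m + 1)) < N)
    (j : Fin (m + 2)) :
    faceD j.castSucc (cone N σ) = cone N (faceD j σ) := by
  have hface : (faceD j σ).2.1 (Fin.last m) < N :=
    (σ.2.2.monotone (Fin.le_last (j.succAbove (Fin.last m)))).trans_lt hσ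
  refine ext' (funext fun k => Fin.snoc_comp_castSucc_succAbove _ _ j k) (funext fun k => ?_)
  change Fin.snoc (α := fun _ => ℕ) σ.2.1 (coneApex N σ) (j.castSucc.succAbove k) =
    Fin.snoc (α := fun _ => ℕ) (σ.2.1 ∘ j.succAbove) (coneApex N (faceD j σ)) k
  rw [coneApex_eq hσ, coneApex_eq hface, Fin.snoc_comp_castSucc_succAbove]

theorem faceD_zero_cone {N : ℕ} {σ : DObj n 0} (hσ : σ.2.1 (Fin.last 0) < N) :
    faceD 0 (cone N σ) = vertex (Fin.last n) N := by
  have hsucc : ∀ k : Fin 1, (0 : Fin 2).succAbove k = Fin.last 1 := by decide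
  refine ext' (funext fun k => ?_) (funext fun k => ?_)
  · change Fin.snoc (α := fun _ => Fin (n + 1)) σ.1 (Fin.last n) ((0 : Fin 2).succAbove k) =
      Fin.last n
    rw [hsucc, Fin.snoc_last]
  · change Fin.snoc (α := fun _ => ℕ) σ.2.1 (coneApex N σ) ((0 : Fin 2).succAbove k) = N
    rw [hsucc, Fin.snoc_last, coneApex_eq hσ]

end DObj

open DObj

theorem Finsupp.mapDomain_const {X Y M : Type*} [AddCommMonoid M] (y : Y) (c : X →₀ M) :
    mapDomain (fun _ => y) c = single y (c.sum fun _ a => a) := by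
  rw [mapDomain, single_sum]

section Chains

variable {A : Type*} [AddCommGroup A] {n : ℕ}

theorem bdryD_zsmul (m : ℕ) (z : ℤ) (c : DObj n (m + 1) →₀ A) :
    bdryD A n m (z • c) = z • bdryD A n m c := by
  simp only [bdryD, Finset.smul_sum, mapDomain_smul, smul_comm z]

theorem bdryD_mapDomain_cone {N m : ℕ} {c : DObj n (m + 1) →₀ A}
    (hc : ∀ σ ∈ c.support, σ.2.1 (Fin.last (m + 1)) < N) :
    bdryD A n (m + 1) (mapDomain (cone N) c) =
      mapDomain (cone N) (bdryD A n m c) + ((-1 : ℤ) ^ m) • c := by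
  rw [bdryD, Fin.sum_univ_castSucc]
  congr 1
  · rw [bdryD, mapDomain_finsetSum]
    refine Finset.sum_congr rfl fun j _ => ?_
    rw [mapDomain_smul, Fin.val_castSucc, ← mapDomain_comp, ← mapDomain_comp]
    exact congrArg _ (mapDomain_congr fun σ hσ => faceD_castSucc_cone (hc σ hσ) j)
  · rw [← mapDomain_comp, Function.LeftInverse.comp_eq_id (faceD_last_cone N), mapDomain_id,
      Fin.val_last, pow_add, neg_one_sq, mul_one]

theorem bdryD_mapDomain_cone_zero {N : ℕ} {c : DObj n 0 →₀ A}
    (hc : ∀ σ ∈ c.support, σ.2.1 (Fin.last 0) < N) :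
    bdryD A n 0 (mapDomain (cone N) c) =
      single (vertex (Fin.last n) N) (c.sum fun _ a => a) - c := by
  have hface : mapDomain (faceD 0 ∘ cone N) c = mapDomain (fun _ => vertex (Fin.last n) N) c :=
    mapDomain_congr fun σ hσ => faceD_zero_cone (hc σ hσ)
  rw [bdryD, Fin.sum_univ_two, ← mapDomain_comp, ← mapDomain_comp, hface,
    Finsupp.mapDomain_const, show (1 : Fin 2) = Fin.last 1 from rfl,
    Function.LeftInverse.comp_eq_id (faceD_last_cone N), mapDomain_id]
  simp [sub_eq_add_neg]

theorem exists_lt_last_of_support {m : ℕ} (c : DObj n m →₀ A) :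
    ∃ N, ∀ σ ∈ c.support, σ.2.1 (Fin.last m) < N :=
  ⟨c.support.sup (fun σ => σ.2.1 (Fin.last m)) + 1,
    fun _ hσ => Nat.lt_succ_of_le (Finset.le_sup (f := fun σ => σ.2.1 (Fin.last m)) hσ)⟩

theorem bdryD_cone_of_bdryD_eq_zero {N m : ℕ} {c : DObj n (m + 1) →₀ A}
    (hc : ∀ σ ∈ c.support, σ.2.1 (Fin.last (m + 1)) < N) (hcycle : bdryD A n m c = 0) :
    bdryD A n (m + 1) (((-1 : ℤ) ^ m) • mapDomain (cone N) c) = c := by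
  rw [bdryD_zsmul, bdryD_mapDomain_cone hc, hcycle, mapDomain_zero, zero_add, smul_smul,
    ← pow_add, Even.neg_one_pow ⟨m, rfl⟩, one_smul]

theorem bdryD_cone_of_sum_eq_zero {N : ℕ} {c : DObj n 0 →₀ A}
    (hc : ∀ σ ∈ c.support, σ.2.1 (Fin.last 0) < N) (hsum : (c.sum fun _ a => a) = 0) :
    bdryD A n 0 (-mapDomain (cone N) c) = c := by
  rw [← neg_one_zsmul, bdryD_zsmul, bdryD_mapDomain_cone_zero hc, hsum, single_zero, zero_sub,
    neg_one_zsmul, neg_neg]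

end Chains

section L1

variable {X Y : Type*}

theorem l1_mapDomain_of_injective {f : X → Y} (hf : Function.Injective f) (c : X →₀ ℤ) :
    l1 (mapDomain f c) = l1 c := by
  classical
  rw [l1, mapDomain_support_of_injective hf, Finset.sum_image fun _ _ _ _ h => hf h]
  exact Finset.sum_congr rfl fun x _ => by rw [mapDomain_apply hf]

theorem l1_zsmul (z : ℤ) (c : X →₀ ℤ) : l1 (z • c) = |z| * l1 c := by
  rcases eq_or_ne z 0 with rfl | hz
  · simp [l1]
  · simp only [l1, support_smul_eq hz, Finsupp.smul_apply, smul_eq_mul, abs_mul, Finset.mul_sum]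

end L1

/-- The Δ-set `𝚫[n] × Γ` is acyclic: every cycle of positive degree
(with coefficients in any abelian group `A`) is a boundary, every `0`-chain whose
coefficients sum to `0` is a boundary; moreover for `A = ℤ` the bounding chain can be
chosen with the same ℓ¹-norm. -/
theorem acyclicity_of_simplex_times_gamma (A : Type*) [AddCommGroup A] (n : ℕ) :
    (∀ (m : ℕ) (c : DObj n (m + 1) →₀ A), bdryD A n m c = 0 →
      ∃ b : DObj n (m + 2) →₀ A, bdryD A n (m + 1) b = c) ∧
    (∀ c : DObj n 0 →₀ A, (c.sum fun _ a => a) = 0 →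
      ∃ b : DObj n 1 →₀ A, bdryD A n 0 b = c) ∧
    (∀ (m : ℕ) (c : DObj n (m + 1) →₀ ℤ), bdryD ℤ n m c = 0 →
      ∃ b : DObj n (m + 2) →₀ ℤ, bdryD ℤ n (m + 1) b = c ∧ l1 b = l1 c) ∧
    (∀ c : DObj n 0 →₀ ℤ, (c.sum fun _ a => a) = 0 →
      ∃ b : DObj n 1 →₀ ℤ, bdryD ℤ n 0 b = c ∧ l1 b = l1 c) := by
  refine ⟨fun m c hc => ?_, fun c hc => ?_, fun m c hc => ?_, fun c hc => ?_⟩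
  · obtain ⟨N, hN⟩ := exists_lt_last_of_support c
    exact ⟨_, bdryD_cone_of_bdryD_eq_zero hN hc⟩
  · obtain ⟨N, hN⟩ := exists_lt_last_of_support c
    exact ⟨_, bdryD_cone_of_sum_eq_zero hN hc⟩
  · obtain ⟨N, hN⟩ := exists_lt_last_of_support c
    refine ⟨_, bdryD_cone_of_bdryD_eq_zero hN hc, ?_⟩
    rw [l1_zsmul, l1_mapDomain_of_injective (cone_injective N _), abs_pow, abs_neg, abs_one,
      one_pow, one_mul]
  · obtain ⟨N, hN⟩ := exists_lt_last_of_support c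
    refine ⟨_, bdryD_cone_of_sum_eq_zero hN hc, ?_⟩
    rw [← neg_one_zsmul, l1_zsmul, l1_mapDomain_of_injective (cone_injective N _), abs_neg,
      abs_one, one_mul]
end

section
/- Let K be a simplicial set and G a group acting on K on the left by simplicial automorphisms (a group homomorphism g ↦ a(g) from G to the automorphism group of K in SSet; write g·σ for the induced action on simplices, which commutes with all structure maps). Assume: (i) G admits a right-invariant mean μ (i.e. G is amenable); (ii) for every g ∈ G the automorphism a(g) is simplicially homotopic to the identity, i.e. there exists a morphism of simplicial sets H : K × Δ[1] → K whose restrictions along the two vertex inclusions of Δ[1] are the identity of K and a(g) respectively (identifying K × Δ[0] with K). Then for every m ∈ ℕ, every bounded m-cocycle c of K is boundedly cohomologous to a G-invariant bounded m-cocycle of norm at most ‖c‖: there exist a bounded m-cocycle γ with γ(g·σ) = γ(σ) for all g ∈ G and all σ ∈ K_m and ‖γ‖_∞ ≤ ‖c‖_∞, and a bounded (m−1)-cochain κ with γ − c = ∂*κ (for m = 0, with B^{−1} = 0, this says γ = c, i.e. c itself is G-invariant). -/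
open CategoryTheory Simplicial

lemma translate_mem_bddFns {G : Type*} [Group G] (g : G) (f : ↥(bddFns G)) :
    (fun x => (f : G → ℝ) (x * g)) ∈ bddFns G := by
  obtain ⟨C, hC⟩ := f.2
  exact ⟨C, fun x => hC (x * g)⟩

/-- A right-invariant mean on a group `G`. -/
def IsRightInvariantMean (G : Type*) [Group G] (μ : ↥(bddFns G) →ₗ[ℝ] ℝ) : Prop :=
  (∀ f : ↥(bddFns G), |μ f| ≤ supN (f : G → ℝ)) ∧
  (∀ r : ℝ, μ ⟨fun _ => r, const_mem_bddFns G r⟩ = r) ∧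
  (∀ (g : G) (f : ↥(bddFns G)), μ ⟨fun x => (f : G → ℝ) (x * g), translate_mem_bddFns g f⟩ = μ f)

/-- A group is amenable if it admits a right-invariant mean. -/
def Amenable (G : Type*) [Group G] : Prop := ∃ μ, IsRightInvariantMean G μ

/-- The dimension-wise product of two simplicial sets. -/
def prodSSet (X Y : SSet) : SSet where
  obj c := X.obj c × Y.obj c
  map f := TypeCat.ofHom fun p => (X.map f p.1, Y.map f p.2)

/-- The standard `k`-simplex `Δ[k]`, the simplicial set whose `m`-simplices are the
monotone maps `[m] → [k]` of the simplex category. -/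
def stdSimp (k : ℕ) : SSet where
  obj c := c.unop ⟶ SimplexCategory.mk k
  map f := TypeCat.ofHom fun θ => f.unop ≫ θ

/-- The vertex `e` of `Δ[1]` at each simplicial level (the image of the unique simplex
under the vertex inclusion `ι_e : Δ[0] → Δ[1]`): the constant map with value `e`. -/
def vert (e : Fin 2) (c : SimplexCategoryᵒᵖ) : (stdSimp 1).obj c :=
  SimplexCategory.Hom.mk ⟨fun _ => e, monotone_const⟩

/-- The coboundary operator on cochains of a simplicial set `K`:
`∂*f(x) = ∑ᵢ (-1)ⁱ f(∂ᵢ x)`. -/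
noncomputable def dKfun (K : SSet) (n : ℕ) (f : (K _⦋n⦌) → ℝ) : (K _⦋n + 1⦌) → ℝ :=
  fun x => ∑ i : Fin (n + 2), (-1 : ℝ) ^ (i : ℕ) * f (K.δ i x)

/-!
For each `g`, the prism operator of a simplicial homotopy `H` from the identity to `a g` turns
an `(m+1)`-cocycle `c` into an `m`-cochain `κ_g` with `∂*κ_g = c ∘ a g - c` and
`‖κ_g‖ ≤ (m + 1) ‖c‖`; in degree `0` the same identity reads `c ∘ a g = c`.
Averaging `g ↦ c ∘ a g` and `g ↦ κ_g` with the right-invariant mean gives `γ` and `κ`: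
linearity of the mean preserves `γ - c = ∂*κ`, right invariance makes `γ` invariant, and
`‖μ‖ ≤ 1` gives `‖γ‖ ≤ ‖c‖`.
-/

namespace Fin

/-- An injection onto the complement of the pairs `(j, j)` and `(j + 1, j)`. -/
def offDiag {n : ℕ} (p : Fin (n + 1) × Fin n) : Fin (n + 2) × Fin (n + 1) :=
  if p.1 ≤ p.2.castSucc then (p.1.castSucc, p.2.succ) else (p.1.succ, p.2.castSucc)

theorem sum_prod_eq_sum_offDiag_add_sum_diag {M : Type*} [AddCommMonoid M] (n : ℕ)
    (F : Fin (n + 2) × Fin (n + 1) → M) :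
    ∑ p, F p = ∑ p, F (offDiag p) + ∑ j, (F (j.castSucc, j) + F (j.succ, j)) := by
  let e : (Fin (n + 1) × Fin n) ⊕ (Fin (n + 1) ⊕ Fin (n + 1)) → Fin (n + 2) × Fin (n + 1) :=
    Sum.elim offDiag (Sum.elim (fun j => (j.castSucc, j)) (fun j => (j.succ, j)))
  have he : Function.Bijective e := by
    refine (Fintype.bijective_iff_injective_and_card e).mpr ⟨?_, ?_⟩
    · rintro (⟨i, j⟩ | j | j) (⟨i', j'⟩ | j' | j') h <;>
        simp only [e, offDiag, Sum.elim_inl, Sum.elim_inr] at h <;>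
        (try split_ifs at h) <;> simp_all [Prod.ext_iff, Fin.ext_iff, Fin.le_def] <;> omega
    · simp only [Fintype.card_sum, Fintype.card_prod, Fintype.card_fin]; ring
  rw [← Fintype.sum_bijective e he _ _ fun _ => rfl, Fintype.sum_sum_type, Fintype.sum_sum_type,
    ← Finset.sum_add_distrib]
  rfl

end Fin

section Prism

open SimplexCategory Opposite

namespace stdSimp

def step (n t : ℕ) : (stdSimp 1).obj (op ⦋n⦌) :=
  Hom.mk ⟨fun i => if (i : ℕ) < t then 0 else 1, fun i j hij => by
    dsimp only
    split_ifs with hi hj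
    exacts [le_rfl, Fin.zero_le _, absurd ((Fin.le_def.mp hij).trans_lt ‹_›) hi, le_rfl]⟩

theorem step_apply (n t : ℕ) (i : Fin (n + 1)) :
    (step n t).toOrderHom i = if (i : ℕ) < t then 0 else 1 :=
  rfl

theorem step_zero (n : ℕ) : step n 0 = vert 1 (op ⦋n⦌) := by
  apply Hom.ext
  ext i
  simp [step, vert]

theorem step_succ_self (n : ℕ) : step n (n + 1) = vert 0 (op ⦋n⦌) := by
  apply Hom.ext
  ext i
  simpa [step, vert] using i.is_le

theorem δ_comp_step_of_lt {n t : ℕ} {i : Fin (n + 2)} (h : (i : ℕ) < t) :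
    δ i ≫ step (n + 1) t = step n (t - 1) := by
  apply Hom.ext
  ext k
  change ((step (n + 1) t).toOrderHom (i.succAbove k) : ℕ) = _
  simp only [step_apply, Fin.succAbove, Fin.lt_def]
  split_ifs <;> simp_all <;> omega

theorem δ_comp_step_of_le {n t : ℕ} {i : Fin (n + 2)} (h : t ≤ (i : ℕ)) :
    δ i ≫ step (n + 1) t = step n t := by
  apply Hom.ext
  ext k
  change ((step (n + 1) t).toOrderHom (i.succAbove k) : ℕ) = _
  simp only [step_apply, Fin.succAbove, Fin.lt_def]
  split_ifs <;> simp_all <;> omega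

end stdSimp

variable {K : SSet} (H : prodSSet K (stdSimp 1) ⟶ K)

theorem δ_app_prod {n : ℕ} (i : Fin (n + 2)) (x : K _⦋n + 1⦌)
    (θ : (stdSimp 1).obj (op ⦋n + 1⦌)) :
    K.δ i (H.app _ (x, θ)) = H.app _ (K.δ i x, δ i ≫ θ) :=
  (SSet.δ_naturality_apply H i (x, θ)).symm

/-- The image under `H` of the `j`-th nondegenerate `(n + 1)`-simplex of `Δ[n] × Δ[1]`. -/
def prism {n : ℕ} (j : Fin (n + 1)) (τ : K _⦋n⦌) : K _⦋n + 1⦌ :=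
  H.app _ (K.σ j τ, stdSimp.step (n + 1) (j + 1))

theorem δ_castSucc_prism {n : ℕ} (j : Fin (n + 1)) (τ : K _⦋n⦌) :
    K.δ j.castSucc (prism H j τ) = H.app _ (τ, stdSimp.step n j) := by
  rw [prism, δ_app_prod, SSet.δ_comp_σ_self_apply, stdSimp.δ_comp_step_of_lt (by simp)]
  rfl

theorem δ_succ_prism {n : ℕ} (j : Fin (n + 1)) (τ : K _⦋n⦌) :
    K.δ j.succ (prism H j τ) = H.app _ (τ, stdSimp.step n (j + 1)) := by
  rw [prism, δ_app_prod, SSet.δ_comp_σ_succ_apply, stdSimp.δ_comp_step_of_le (by simp)]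

theorem δ_castSucc_prism_succ {n : ℕ} {i : Fin (n + 2)} {j : Fin (n + 1)} (h : i ≤ j.castSucc)
    (σ : K _⦋n + 1⦌) : K.δ i.castSucc (prism H j.succ σ) = prism H j (K.δ i σ) := by
  rw [prism, δ_app_prod, SSet.δ_comp_σ_of_le_apply h,
    stdSimp.δ_comp_step_of_lt (by simp [Fin.le_def] at h ⊢; omega)]
  rfl

theorem δ_succ_prism_castSucc {n : ℕ} {i : Fin (n + 2)} {j : Fin (n + 1)} (h : j.castSucc < i)
    (σ : K _⦋n + 1⦌) : K.δ i.succ (prism H j.castSucc σ) = prism H j (K.δ i σ) := by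
  rw [prism, δ_app_prod, SSet.δ_comp_σ_of_gt_apply h,
    stdSimp.δ_comp_step_of_le (by simp [Fin.lt_def] at h ⊢; omega)]
  rfl

noncomputable def prismCochain {n : ℕ} (c : K _⦋n + 1⦌ → ℝ) : K _⦋n⦌ → ℝ :=
  fun τ => ∑ j : Fin (n + 1), (-1 : ℝ) ^ (j : ℕ) * c (prism H j τ)

noncomputable def signedPrismFace {n : ℕ} (c : K _⦋n⦌ → ℝ) (σ : K _⦋n⦌)
    (p : Fin (n + 2) × Fin (n + 1)) : ℝ :=
  (-1 : ℝ) ^ (p.1 + p.2 : ℕ) * c (K.δ p.1 (prism H p.2 σ))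

theorem sum_signedPrismFace_eq_zero {n : ℕ} {c : K _⦋n⦌ → ℝ} (hc : dKfun K n c = 0)
    (σ : K _⦋n⦌) : ∑ p, signedPrismFace H c σ p = 0 := by
  rw [Fintype.sum_prod_type_right]
  refine Finset.sum_eq_zero fun j _ => ?_
  calc ∑ i, signedPrismFace H c σ (i, j) = (-1) ^ (j : ℕ) * dKfun K n c (prism H j σ) := by
        simp only [signedPrismFace, dKfun, Finset.mul_sum, pow_add]
        exact Finset.sum_congr rfl fun _ _ => by ring
    _ = 0 := by rw [hc, Pi.zero_apply, mul_zero]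

theorem signedPrismFace_diag {n : ℕ} (c : K _⦋n⦌ → ℝ) (σ : K _⦋n⦌) (j : Fin (n + 1)) :
    signedPrismFace H c σ (j.castSucc, j) + signedPrismFace H c σ (j.succ, j) =
      c (H.app _ (σ, stdSimp.step n j)) - c (H.app _ (σ, stdSimp.step n (j + 1))) := by
  simp only [signedPrismFace, δ_castSucc_prism, δ_succ_prism, Fin.val_castSucc, Fin.val_succ]
  rw [show (j : ℕ) + 1 + j = 2 * j + 1 by ring, ← two_mul, pow_succ, pow_mul, neg_one_sq, one_pow]
  ring

theorem signedPrismFace_offDiag {n : ℕ} (c : K _⦋n + 1⦌ → ℝ) (σ : K _⦋n + 1⦌)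
    (p : Fin (n + 2) × Fin (n + 1)) :
    signedPrismFace H c σ (Fin.offDiag p) =
      -((-1) ^ (p.1 + p.2 : ℕ) * c (prism H p.2 (K.δ p.1 σ))) := by
  rcases p with ⟨i, j⟩
  unfold Fin.offDiag
  split_ifs with h
  · simp only [signedPrismFace, δ_castSucc_prism_succ H h, Fin.val_castSucc, Fin.val_succ]
    ring
  · simp only [signedPrismFace, δ_succ_prism_castSucc H (not_le.mp h), Fin.val_castSucc,
      Fin.val_succ]
    ring

/-- Expanding `∑ⱼ (-1)ʲ ∂*c (prism H j σ) = 0`, the faces `∂ⱼ` and `∂ⱼ₊₁` of the `j`-th prism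
telescope from `H (σ, 1)` to `H (σ, 0)`; the other faces are prisms over faces of `σ`. -/
theorem sub_eq_neg_sum_signedPrismFace_offDiag {n : ℕ} {c : K _⦋n⦌ → ℝ}
    (hc : dKfun K n c = 0) (σ : K _⦋n⦌) :
    c (H.app _ (σ, vert 1 _)) - c (H.app _ (σ, vert 0 _)) =
      -∑ p, signedPrismFace H c σ (Fin.offDiag p) := by
  have htelescope : ∑ j : Fin (n + 1),
      (signedPrismFace H c σ (j.castSucc, j) + signedPrismFace H c σ (j.succ, j)) =
        c (H.app _ (σ, vert 1 _)) - c (H.app _ (σ, vert 0 _)) := by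
    simp only [signedPrismFace_diag H]
    rw [Fin.sum_univ_eq_sum_range (fun t => c (H.app _ (σ, stdSimp.step n t)) -
      c (H.app _ (σ, stdSimp.step n (t + 1)))), Finset.sum_range_sub', stdSimp.step_zero,
      stdSimp.step_succ_self]
  have := Fin.sum_prod_eq_sum_offDiag_add_sum_diag n (signedPrismFace H c σ)
  rw [sum_signedPrismFace_eq_zero H hc, htelescope] at this
  linear_combination -this

theorem abs_prismCochain_le {n : ℕ} {c : K _⦋n + 1⦌ → ℝ} {C : ℝ} (hc : ∀ x, |c x| ≤ C)
    (τ : K _⦋n⦌) : |prismCochain H c τ| ≤ (n + 1) * C := by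
  calc |prismCochain H c τ| ≤ ∑ j : Fin (n + 1), |(-1 : ℝ) ^ (j : ℕ) * c (prism H j τ)| :=
        Finset.abs_sum_le_sum_abs _ _
    _ ≤ ∑ _j : Fin (n + 1), C := Finset.sum_le_sum fun j _ => by
        rw [abs_mul, abs_pow, abs_neg, abs_one, one_pow, one_mul]
        exact hc _
    _ = (n + 1) * C := by simp

theorem cocycle_zero_homotopy_invariant {c : K _⦋0⦌ → ℝ} (hc : dKfun K 0 c = 0)
    (σ : K _⦋0⦌) : c (H.app _ (σ, vert 1 _)) = c (H.app _ (σ, vert 0 _)) := by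
  have := sub_eq_neg_sum_signedPrismFace_offDiag H hc σ
  rw [Finset.univ_eq_empty, Finset.sum_empty, neg_zero, sub_eq_zero] at this
  exact this

theorem dKfun_prismCochain {n : ℕ} {c : K _⦋n + 1⦌ → ℝ} (hc : dKfun K (n + 1) c = 0)
    (σ : K _⦋n + 1⦌) :
    dKfun K n (prismCochain H c) σ = c (H.app _ (σ, vert 1 _)) - c (H.app _ (σ, vert 0 _)) := by
  rw [sub_eq_neg_sum_signedPrismFace_offDiag H hc σ]
  simp only [signedPrismFace_offDiag H, Finset.sum_neg_distrib, neg_neg, Fintype.sum_prod_type,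
    dKfun, prismCochain, Finset.mul_sum, pow_add, mul_assoc]

end Prism

theorem supN_nonneg {X : Type*} (f : X → ℝ) : 0 ≤ supN f :=
  Real.iSup_nonneg fun x => abs_nonneg (f x)

theorem abs_le_supN {X : Type*} {f : X → ℝ} (hf : IsBdd f) (x : X) : |f x| ≤ supN f := by
  obtain ⟨C, hC⟩ := hf
  exact le_ciSup ⟨C, Set.forall_mem_range.mpr hC⟩ x

theorem supN_le {X : Type*} {f : X → ℝ} {C : ℝ} (hC : 0 ≤ C) (h : ∀ x, |f x| ≤ C) :
    supN f ≤ C :=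
  Real.iSup_le h hC

section Mean

variable {G : Type*} (μ : ↥(bddFns G) →ₗ[ℝ] ℝ)

open Classical in
/-- Extended by `0` to unbounded functions, so that averages can be formed without proofs. -/
noncomputable def extendMean (u : G → ℝ) : ℝ :=
  if h : IsBdd u then μ ⟨u, h⟩ else 0

theorem extendMean_of_isBdd {u : G → ℝ} (hu : IsBdd u) : extendMean μ u = μ ⟨u, hu⟩ :=
  dif_pos hu

theorem extendMean_add {u v : G → ℝ} (hu : IsBdd u) (hv : IsBdd v) :
    extendMean μ (u + v) = extendMean μ u + extendMean μ v := by
  rw [extendMean_of_isBdd μ hu, extendMean_of_isBdd μ hv,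
    extendMean_of_isBdd μ ((bddFns G).add_mem hu hv), ← map_add]
  rfl

theorem extendMean_sub {u v : G → ℝ} (hu : IsBdd u) (hv : IsBdd v) :
    extendMean μ (u - v) = extendMean μ u - extendMean μ v := by
  rw [extendMean_of_isBdd μ hu, extendMean_of_isBdd μ hv,
    extendMean_of_isBdd μ ((bddFns G).sub_mem hu hv), ← map_sub]
  rfl

theorem extendMean_smul (r : ℝ) {u : G → ℝ} (hu : IsBdd u) :
    extendMean μ (r • u) = r * extendMean μ u := by
  rw [extendMean_of_isBdd μ hu, extendMean_of_isBdd μ ((bddFns G).smul_mem r hu), ← smul_eq_mul,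
    ← map_smul]
  rfl

theorem extendMean_sum {ι : Type*} (s : Finset ι) {u : ι → G → ℝ} (hu : ∀ i ∈ s, IsBdd (u i)) :
    extendMean μ (∑ i ∈ s, u i) = ∑ i ∈ s, extendMean μ (u i) := by
  classical
  induction s using Finset.induction_on with
  | empty => simpa using extendMean_smul μ 0 (bddFns G).zero_mem
  | insert i s hi ih =>
    have hs : ∀ j ∈ s, IsBdd (u j) := fun j hj => hu j (Finset.mem_insert_of_mem hj)
    rw [Finset.sum_insert hi, Finset.sum_insert hi,
      extendMean_add μ (hu i (Finset.mem_insert_self i s)) ((bddFns G).sum_mem hs), ih hs]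

variable {X : Type*}

noncomputable def average (f : G → X → ℝ) (x : X) : ℝ :=
  extendMean μ fun g => f g x

theorem average_dKfun {K : SSet} {n : ℕ} {f : G → K _⦋n⦌ → ℝ}
    (hf : ∀ x, IsBdd fun g => f g x) :
    average μ (fun g => dKfun K n (f g)) = dKfun K n (average μ f) := by
  funext σ
  have hsum : (fun g => dKfun K n (f g) σ) =
      ∑ i : Fin (n + 2), (-1 : ℝ) ^ (i : ℕ) • fun g => f g (K.δ i σ) := by
    funext g
    simp [dKfun]
  rw [average, hsum, extendMean_sum μ _ fun i _ => (bddFns G).smul_mem _ (hf _)]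
  simp only [dKfun, average]
  exact Finset.sum_congr rfl fun i _ => extendMean_smul μ _ (hf _)

variable [Group G] {μ}

theorem abs_extendMean_le (hμ : IsRightInvariantMean G μ) (u : G → ℝ) :
    |extendMean μ u| ≤ supN u := by
  unfold extendMean
  split_ifs
  · exact hμ.1 _
  · simpa using supN_nonneg u

theorem extendMean_const (hμ : IsRightInvariantMean G μ) (r : ℝ) :
    extendMean μ (fun _ => r) = r :=
  (extendMean_of_isBdd μ (const_mem_bddFns G r)).trans (hμ.2.1 r)

theorem extendMean_mul_right (hμ : IsRightInvariantMean G μ) {u : G → ℝ} (hu : IsBdd u)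
    (g : G) : extendMean μ (fun x => u (x * g)) = extendMean μ u :=
  (extendMean_of_isBdd μ (translate_mem_bddFns g ⟨u, hu⟩)).trans <|
    (hμ.2.2 g ⟨u, hu⟩).trans (extendMean_of_isBdd μ hu).symm

theorem abs_average_le (hμ : IsRightInvariantMean G μ) {f : G → X → ℝ} {C : ℝ}
    (hf : ∀ g x, |f g x| ≤ C) (x : X) : |average μ f x| ≤ C :=
  (abs_extendMean_le hμ _).trans <| supN_le ((abs_nonneg _).trans (hf 1 x)) fun g => hf g x

theorem average_apply_eq_of_mul_right (hμ : IsRightInvariantMean G μ) {f : G → X → ℝ} {h : G}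
    {φ : X → X} (hφ : ∀ g x, f g (φ x) = f (g * h) x) {x : X} (hf : IsBdd fun g => f g x) :
    average μ f (φ x) = average μ f x := by
  simp only [average, hφ]
  exact extendMean_mul_right hμ hf h

theorem average_sub_const (hμ : IsRightInvariantMean G μ) {f : G → X → ℝ}
    (hf : ∀ x, IsBdd fun g => f g x) (c : X → ℝ) :
    average μ (fun g => f g - c) = average μ f - c := by
  funext x
  rw [Pi.sub_apply, average, average, ← extendMean_const hμ (c x)]
  exact extendMean_sub μ (hf x) (const_mem_bddFns G (c x))

end Mean

/-- Let an amenable group `G` act on a simplicial set `K` by simplicial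
automorphisms, each of which is simplicially homotopic to the identity. Then every bounded
cocycle `c` of `K` is boundedly cohomologous to a `G`-invariant bounded cocycle `γ` with
`‖γ‖_∞ ≤ ‖c‖_∞` (and in degree `0`, `c` itself is `G`-invariant). -/
theorem invariant_bounded_cocycle_of_amenable_action
    (K : SSet) (G : Type*) [Group G] (a : G →* Aut K)
    (hG : Amenable G)
    (hhtp : ∀ g : G, ∃ H : prodSSet K (stdSimp 1) ⟶ K,
      ∀ (c : SimplexCategoryᵒᵖ) (σ : K.obj c),
        H.app c (σ, vert 0 c) = σ ∧ H.app c (σ, vert 1 c) = (a g).hom.app c σ) :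
    (∀ c : (K _⦋0⦌) → ℝ, IsBdd c → dKfun K 0 c = 0 →
      ∀ (g : G) (σ : K _⦋0⦌), c ((a g).hom.app _ σ) = c σ) ∧
    (∀ (m : ℕ) (c : (K _⦋m + 1⦌) → ℝ), IsBdd c → dKfun K (m + 1) c = 0 →
      ∃ (γ : (K _⦋m + 1⦌) → ℝ) (κ : (K _⦋m⦌) → ℝ), IsBdd γ ∧ IsBdd κ ∧
        (∀ (g : G) (σ : K _⦋m + 1⦌), γ ((a g).hom.app _ σ) = γ σ) ∧
        supN γ ≤ supN c ∧
        γ - c = dKfun K m κ) := by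
  obtain ⟨μ, hμ⟩ := hG
  choose H hH using hhtp
  refine ⟨fun c _ hc g σ => ?_, fun m c hc hcoc => ?_⟩
  · simpa only [(hH g _ σ).1, (hH g _ σ).2] using cocycle_zero_homotopy_invariant (H g) hc σ
  have hcg : ∀ g σ, |c ((a g).hom.app _ σ)| ≤ supN c := fun g σ => abs_le_supN hc _
  have hκg : ∀ g τ, |prismCochain (H g) c τ| ≤ (m + 1) * supN c := fun g =>
    abs_prismCochain_le (H g) (abs_le_supN hc)
  refine ⟨average μ fun g σ => c ((a g).hom.app _ σ), average μ fun g => prismCochain (H g) c,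
    ⟨_, abs_average_le hμ hcg⟩, ⟨_, abs_average_le hμ hκg⟩,
    fun g σ => average_apply_eq_of_mul_right hμ (fun g' σ => by rw [map_mul]; rfl)
      ⟨_, fun g' => hcg g' σ⟩,
    supN_le (supN_nonneg c) (abs_average_le hμ hcg), ?_⟩
  rw [← average_sub_const hμ fun σ => ⟨_, fun g => hcg g σ⟩,
    ← average_dKfun μ fun τ => ⟨_, fun g => hκg g τ⟩]
  congr
  funext g σ
  rw [dKfun_prismCochain (H g) hcoc, (hH g _ σ).1, (hH g _ σ).2]
  rfl
end
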